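/- arXiv:2307.03940 — 4 statements merged into one kernel-verified Lean document; each statement's English description precedes it below -/
import Mathlib

section
/- For every a > 0, the set of counterexamples 𝔠(ℝ × aℤ) to uniqueness in sampled Gabor phase retrieval on the set of equidistant horizontal lines ℝ × aℤ is dense in L²(ℝ). -/
open MeasureTheory Complex

/-- The Gabor transform of `f : ℝ → ℂ` at `(x, ω)`:
`Gf(x,ω) = 2^{1/4} ∫ f(t) e^{-π(t-x)²} e^{-2πitω} dt`. -/
noncomputable def gaborTransform (f : ℝ → ℂ) (x ω : ℝ) : ℂ :=
  (((2 : ℝ) ^ ((1 : ℝ) / 4) : ℝ) : ℂ) *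
    ∫ t : ℝ, f t * Complex.exp (-(Real.pi : ℂ) * ((t : ℂ) - (x : ℂ)) ^ 2) *
      Complex.exp (-2 * (Real.pi : ℂ) * Complex.I * (t : ℂ) * (ω : ℂ))

/-- The set of counterexamples to uniqueness in sampled Gabor phase retrieval on `Λ ⊆ ℝ²`:
all `f ∈ L²(ℝ)` for which there is `g ∈ L²(ℝ)` with `|Gf| = |Gg|` on `Λ` and `f` does not
agree with `g` up to global phase. -/
noncomputable def counterexamples (Λ : Set (ℝ × ℝ)) :
    Set (Lp ℂ 2 (volume : Measure ℝ)) :=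
  {f | ∃ g : Lp ℂ 2 (volume : Measure ℝ),
    (∀ p ∈ Λ, ‖gaborTransform (⇑f) p.1 p.2‖ =
      ‖gaborTransform (⇑g) p.1 p.2‖) ∧
    ¬ ∃ α : ℝ, f = Complex.exp (α * Complex.I) • g}

/-!
Let `h` be continuous, compactly supported and nonzero, and `c = a⁻¹`. Completing the square shows
that the weighted translate `h₁ t = e^{π c t} h (t - c/2)` has Gabor transform `m · Gh`, where
`m x ω = exp (π c² / 4 + π c (x - i ω))`; its phase is `e^{-iπcω}`, so `m` is real on `ℝ × aℤ`.
For non-real `ζ`, the Gabor transforms of `h + ζ h₁` and `h + ζ̄ h₁` are `(1 + ζ m) Gh` and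
`(1 + ζ̄ m) Gh`, which have equal moduli on `ℝ × aℤ`. The two functions do not agree up to a
global phase: a relation `A h = B h₁` with `(A, B) ≠ 0` would make the support of `h` invariant
under a translation by `c/2`, impossible for a nonzero compactly supported function. Letting
`ζ → 0` and using the density of continuous compactly supported functions in `L²` proves the
theorem.
-/

open Filter Topology
open scoped Real ComplexConjugate ENNReal

theorem HasCompactSupport.eq_zero_of_forall_ne_zero_add {E M : Type*} [NormedAddCommGroup E]
    [NormedSpace ℝ E] [Zero M] {f : E → M} (hf : HasCompactSupport f) {d : E} (hd : d ≠ 0)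
    (hfd : ∀ x, f x ≠ 0 → f (x + d) ≠ 0) : f = 0 := by
  by_contra hne
  obtain ⟨x, hx⟩ := Function.ne_iff.mp hne
  have hmem : ∀ n : ℕ, x + n • d ∈ tsupport f := by
    refine fun n => subset_tsupport f ?_
    induction n with
    | zero => simpa using hx
    | succ n ih => simpa [succ_nsmul, add_assoc] using hfd _ ih
  obtain ⟨C, hC⟩ := hf.isBounded.exists_norm_le
  obtain ⟨n, hn⟩ := exists_nat_gt ((C + ‖x‖) / ‖d‖)
  have hnd : (n : ℝ) * ‖d‖ ≤ C + ‖x‖ := by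
    calc (n : ℝ) * ‖d‖ = ‖(x + n • d) - x‖ := by
          rw [add_sub_cancel_left, RCLike.norm_nsmul ℝ, nsmul_eq_mul]
      _ ≤ ‖x + n • d‖ + ‖x‖ := norm_sub_le _ _
      _ ≤ C + ‖x‖ := by gcongr; exact hC _ (hmem n)
  rw [div_lt_iff₀ (norm_pos_iff.mpr hd)] at hn
  linarith

theorem dense_setOf_ae_eq_continuous_hasCompactSupport {α E : Type*} [TopologicalSpace α]
    [NormalSpace α] [R1Space α] [WeaklyLocallyCompactSpace α] [MeasurableSpace α] [BorelSpace α]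
    [NormedAddCommGroup E] [NormedSpace ℝ E] {μ : Measure α} [μ.Regular] {p : ℝ≥0∞}
    [Fact (1 ≤ p)] (hp : p ≠ ∞) :
    Dense {F : Lp E p μ | ∃ h : α → E, Continuous h ∧ HasCompactSupport h ∧ F =ᵐ[μ] h} := by
  refine Metric.dense_iff.mpr fun F ε hε => ?_
  obtain ⟨h, hhs, hFh, hh, hmem⟩ := (Lp.memLp F).exists_hasCompactSupport_eLpNorm_sub_le hp
    (ε := ENNReal.ofReal (ε / 2)) (by simpa using hε)
  refine ⟨hmem.toLp h, ?_, h, hh, hhs, hmem.coeFn_toLp⟩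
  rw [Metric.mem_ball, dist_comm, Lp.dist_def, eLpNorm_congr_ae (.sub .rfl hmem.coeFn_toLp)]
  linarith [ENNReal.toReal_le_of_le_ofReal (by positivity) hFh]

instance {E : Type*} [NormedAddCommGroup E] [Nontrivial E] :
    Nontrivial (Lp E 2 (volume : Measure ℝ)) := by
  obtain ⟨c, hc⟩ := exists_ne (0 : E)
  refine nontrivial_of_ne (indicatorConstLp 2 (measurableSet_Icc (a := (0 : ℝ)) (b := 1))
    (by simp) c) 0 ?_
  rw [← norm_ne_zero_iff, norm_indicatorConstLp (by norm_num) (by norm_num)]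
  simpa using hc

section gaborTransform

variable {f g : ℝ → ℂ}

theorem gaborTransform_congr_ae (hfg : f =ᵐ[volume] g) (x ω : ℝ) :
    gaborTransform f x ω = gaborTransform g x ω := by
  unfold gaborTransform
  congr 1
  exact integral_congr_ae (hfg.mono fun t ht => by simp only [ht])

theorem integrable_gaborTransform_integrand (hf : Integrable f) (x ω : ℝ) :
    Integrable fun t : ℝ => f t * cexp (-π * (t - x) ^ 2) * cexp (-2 * π * I * t * ω) := by
  refine (hf.mul_bdd (c := 1) (by fun_prop) (.of_forall fun t => ?_)).mul_bdd (c := 1)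
    (by fun_prop) (.of_forall fun t => ?_)
  · rw [norm_exp, Real.exp_le_one_iff]
    rw [← ofReal_sub, ← ofReal_pow, ← ofReal_neg, ← ofReal_mul, ofReal_re]
    nlinarith [Real.pi_pos, sq_nonneg (t - x)]
  · rw [show -2 * π * I * t * ω = ((-2 * π * t * ω : ℝ) : ℂ) * I by push_cast; ring,
      norm_exp_ofReal_mul_I]

theorem gaborTransform_add (hf : Integrable f) (hg : Integrable g) (x ω : ℝ) :
    gaborTransform (f + g) x ω = gaborTransform f x ω + gaborTransform g x ω := by
  simp only [gaborTransform, Pi.add_apply, add_mul]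
  rw [integral_add (integrable_gaborTransform_integrand hf x ω)
    (integrable_gaborTransform_integrand hg x ω), mul_add]

end gaborTransform

theorem gaborTransform_const_smul (ζ : ℂ) (f : ℝ → ℂ) (x ω : ℝ) :
    gaborTransform (ζ • f) x ω = ζ * gaborTransform f x ω := by
  simp only [gaborTransform, Pi.smul_apply, smul_eq_mul, mul_assoc, integral_const_mul]
  ring

noncomputable def expShift (c : ℝ) (h : ℝ → ℂ) (t : ℝ) : ℂ :=
  cexp (π * c * t) * h (t - c / 2)

section expShift

variable {c : ℝ} {h : ℝ → ℂ}

theorem Continuous.expShift (hh : Continuous h) : Continuous (expShift c h) := by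
  unfold _root_.expShift
  fun_prop

theorem HasCompactSupport.expShift (hh : HasCompactSupport h) :
    HasCompactSupport (expShift c h) :=
  (hh.comp_isClosedEmbedding (Homeomorph.subRight (c / 2)).isClosedEmbedding).mul_left

end expShift

theorem gaborTransform_expShift (c : ℝ) (h : ℝ → ℂ) (x ω : ℝ) :
    gaborTransform (expShift c h) x ω =
      cexp (π * c ^ 2 / 4 + π * c * (x - I * ω)) * gaborTransform h x ω := by
  unfold gaborTransform
  rw [← integral_add_right_eq_self _ (c / 2), mul_left_comm]
  congr 1
  rw [← integral_const_mul]
  congr 1 with s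
  simp only [expShift, add_sub_cancel_right]
  calc _ = h s * (cexp (π * c * ↑(s + c / 2)) * cexp (-π * (↑(s + c / 2) - x) ^ 2) *
          cexp (-2 * π * I * ↑(s + c / 2) * ω)) := by ring
    _ = h s * (cexp (π * c ^ 2 / 4 + π * c * (x - I * ω)) * cexp (-π * (s - x) ^ 2) *
          cexp (-2 * π * I * s * ω)) := by
      simp only [← Complex.exp_add]
      push_cast
      ring_nf
    _ = _ := by ring

theorem conj_cexp_eq_self_of_mul_eq_intCast {c ω : ℝ} {n : ℤ} (hcω : c * ω = n) (x : ℝ) :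
    conj (cexp (π * c ^ 2 / 4 + π * c * (x - I * ω))) =
      cexp (π * c ^ 2 / 4 + π * c * (x - I * ω)) := by
  have hn : (n : ℂ) = c * ω := by exact_mod_cast hcω.symm
  have hconj : conj (π * c ^ 2 / 4 + π * c * (x - I * ω) : ℂ) =
      π * c ^ 2 / 4 + π * c * (x - I * ω) + n * (2 * π * I) := by
    simp only [map_add, map_mul, map_div₀, map_pow, map_sub, conj_ofReal, conj_I, map_ofNat, hn]
    ring
  rw [← exp_conj, hconj, exp_add, exp_int_mul_two_pi_mul_I, mul_one]

theorem norm_gaborTransform_add_smul_expShift_conj {c ω : ℝ} {h : ℝ → ℂ} (hh : Integrable h)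
    (hh' : Integrable (expShift c h)) {n : ℤ} (hcω : c * ω = n) (ζ : ℂ) (x : ℝ) :
    ‖gaborTransform (h + ζ • expShift c h) x ω‖ =
      ‖gaborTransform (h + conj ζ • expShift c h) x ω‖ := by
  have hG : ∀ ξ : ℂ, gaborTransform (h + ξ • expShift c h) x ω =
      (1 + ξ * cexp (π * c ^ 2 / 4 + π * c * (x - I * ω))) * gaborTransform h x ω := by
    intro ξ
    rw [gaborTransform_add hh (hh'.smul ξ), gaborTransform_const_smul, gaborTransform_expShift]
    ring
  rw [hG, hG, norm_mul, norm_mul, ← norm_conj (1 + ζ * _), map_add, map_mul, map_one,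
    conj_cexp_eq_self_of_mul_eq_intCast hcω]

theorem eq_zero_of_forall_mul_eq_mul_expShift {c : ℝ} {h : ℝ → ℂ} (hh : HasCompactSupport h)
    (hc : c ≠ 0) {A B : ℂ} (hAB : A ≠ 0 ∨ B ≠ 0) (hrel : ∀ t, A * h t = B * expShift c h t) :
    h = 0 := by
  rcases eq_or_ne A 0 with rfl | hA
  · funext t
    have := hrel (t + c / 2)
    simp only [expShift, add_sub_cancel_right, zero_mul, zero_eq_mul, mul_eq_zero, exp_ne_zero,
      false_or] at this
    exact this.resolve_left (hAB.neg_resolve_left rfl)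
  · refine hh.eq_zero_of_forall_ne_zero_add (d := -(c / 2)) (by simpa using hc) fun t ht => ?_
    have := hrel t
    simp only [expShift, ← sub_eq_add_neg] at this ⊢
    intro h0
    rw [h0, mul_zero, mul_zero] at this
    exact ht ((mul_eq_zero.mp this).resolve_left hA)

theorem not_forall_add_mul_expShift_eq_mul {c : ℝ} {h : ℝ → ℂ} (hh : HasCompactSupport h)
    (h0 : h ≠ 0) (hc : c ≠ 0) {ζ : ℂ} (hζ : conj ζ ≠ ζ) (u : ℂ) :
    ¬ ∀ t, h t + ζ * expShift c h t = u * (h t + conj ζ * expShift c h t) := by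
  refine fun H => h0 (eq_zero_of_forall_mul_eq_mul_expShift hh hc (A := 1 - u)
    (B := u * conj ζ - ζ) ?_ fun t => by linear_combination H t)
  by_cases hu : u = 1
  · simpa [hu, sub_eq_zero] using hζ
  · exact .inl (sub_ne_zero.mpr (Ne.symm hu))

theorem add_smul_mem_counterexamples {a : ℝ} (ha : a ≠ 0) {F H : Lp ℂ 2 (volume : Measure ℝ)}
    {h : ℝ → ℂ} (hh : Continuous h) (hhs : HasCompactSupport h) (h0 : h ≠ 0)
    (hF : F =ᵐ[volume] h) (hH : H =ᵐ[volume] expShift a⁻¹ h) {ζ : ℂ} (hζ : conj ζ ≠ ζ) :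
    F + ζ • H ∈ counterexamples {p : ℝ × ℝ | ∃ n : ℤ, p.2 = a * n} := by
  have hrep (ξ : ℂ) : ⇑(F + ξ • H) =ᵐ[volume] h + ξ • expShift a⁻¹ h :=
    (Lp.coeFn_add _ _).trans (hF.add ((Lp.coeFn_smul _ _).trans (hH.const_smul ξ)))
  refine ⟨F + conj ζ • H, ?_, ?_⟩
  · rintro ⟨x, ω⟩ ⟨n, hn : ω = a * n⟩
    rw [gaborTransform_congr_ae (hrep ζ), gaborTransform_congr_ae (hrep _)]
    exact norm_gaborTransform_add_smul_expShift_conj (hh.integrable_of_hasCompactSupport hhs)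
      (hh.expShift.integrable_of_hasCompactSupport hhs.expShift)
      (by rw [hn, inv_mul_cancel_left₀ ha] : a⁻¹ * ω = n) ζ x
  · rintro ⟨α, hα⟩
    have hae : h + ζ • expShift a⁻¹ h =ᵐ[volume]
        cexp (α * I) • (h + conj ζ • expShift a⁻¹ h) := by
      refine (hrep ζ).symm.trans ?_
      rw [hα]
      exact (Lp.coeFn_smul _ _).trans ((hrep _).const_smul _)
    have hcont (ξ : ℂ) : Continuous (h + ξ • expShift a⁻¹ h) :=
      hh.add (hh.expShift.const_smul ξ)
    have heq := (Continuous.ae_eq_iff_eq volume (hcont ζ) ((hcont _).const_smul _)).mp hae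
    exact not_forall_add_mul_expShift_eq_mul hhs h0 (inv_ne_zero ha) hζ _ (congrFun heq)

/-- For every `a > 0`, the set of counterexamples on the equidistant horizontal lines
`ℝ × aℤ` is dense in `L²(ℝ)`. -/
theorem counterexamples_dense_on_horizontal_lines (a : ℝ) (ha : 0 < a) :
    Dense (counterexamples {p : ℝ × ℝ | ∃ n : ℤ, p.2 = a * n}) := by
  refine Dense.of_closure (((dense_setOf_ae_eq_continuous_hasCompactSupport (p := 2)
    ENNReal.ofNat_ne_top).sdiff_singleton 0).mono ?_)
  rintro F ⟨⟨h, hh, hhs, hF⟩, hF0 : F ≠ 0⟩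
  have h0 : h ≠ 0 := by
    rintro rfl
    exact hF0 (Lp.eq_zero_iff_ae_eq_zero.mpr hF)
  set H := (hh.expShift.memLp_of_hasCompactSupport (μ := volume) (p := 2) hhs.expShift).toLp
    (expShift a⁻¹ h)
  have hlim : Tendsto (fun δ : ℝ => F + (δ * I) • H) (𝓝[≠] 0) (𝓝 F) := by
    refine tendsto_nhdsWithin_of_tendsto_nhds ?_
    simpa using (((continuous_ofReal.mul continuous_const).smul continuous_const).const_add F
      |>.tendsto 0)
  refine mem_closure_of_tendsto hlim (eventually_nhdsWithin_of_forall fun δ hδ => ?_)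
  refine add_smul_mem_counterexamples ha.ne' hh hhs h0 hF (MemLp.coeFn_toLp _) ?_
  simpa [Complex.ext_iff, neg_eq_iff_add_eq_zero, ← two_mul] using hδ
end

section
/- Let a > 0 and define h^±(t) = φ(t)(cosh(πt/a) ± i sinh(πt/a)) for t ∈ ℝ, where φ is the normalized Gaussian. Then h^+, h^- ∈ L²(ℝ), |Gh^+(x,ω)| = |Gh^-(x,ω)| for all (x,ω) ∈ ℝ × aℤ, and there is no α ∈ ℝ with h^+ = e^{iα} h^-. -/
open MeasureTheory Complex

/-- The normalized Gaussian `φ(t) = 2^{1/4} e^{-πt²}`. -/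
noncomputable def normGaussian (t : ℝ) : ℂ :=
  (((2 : ℝ) ^ ((1 : ℝ) / 4) * Real.exp (-Real.pi * t ^ 2) : ℝ) : ℂ)

/-- `h⁺(t) = φ(t)(cosh(πt/a) + i sinh(πt/a))`. -/
noncomputable def hPlus (a : ℝ) (t : ℝ) : ℂ :=
  normGaussian t *
    ((Real.cosh (Real.pi * t / a) : ℂ) + Complex.I * (Real.sinh (Real.pi * t / a) : ℂ))

/-- `h⁻(t) = φ(t)(cosh(πt/a) - i sinh(πt/a))`. -/
noncomputable def hMinus (a : ℝ) (t : ℝ) : ℂ :=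
  normGaussian t *
    ((Real.cosh (Real.pi * t / a) : ℂ) - Complex.I * (Real.sinh (Real.pi * t / a) : ℂ))

/-!
Since `cosh u ± i sinh u = ((1 ± i) eᵘ + (1 ∓ i) e⁻ᵘ) / 2`, both signals are combinations of the
tilted Gaussians `φ(t) e^{±πt/a}`, whose Gabor transforms are Gaussian integrals in closed form.
The ratio of the two transforms is `e^{π(x - iω)/a}`, which is real when `ω ∈ aℤ`; so, up to the
common factor `G(φ e^{-πt/a})`, the coefficients of `Gh⁻` are the complex conjugates of those of
`Gh⁺`. A global phase is excluded by comparing `h⁺` and `h⁻` at `t = 0` and at `t = a`.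
-/

open ComplexConjugate

noncomputable def gaborIntegrand (f : ℝ → ℂ) (x ω t : ℝ) : ℂ :=
  f t * Complex.exp (-(Real.pi : ℂ) * ((t : ℂ) - (x : ℂ)) ^ 2) *
    Complex.exp (-2 * (Real.pi : ℂ) * Complex.I * (t : ℂ) * (ω : ℂ))

theorem gaborTransform_eq_integral_gaborIntegrand (f : ℝ → ℂ) (x ω : ℝ) :
    gaborTransform f x ω =
      (((2 : ℝ) ^ ((1 : ℝ) / 4) : ℝ) : ℂ) * ∫ t, gaborIntegrand f x ω t :=
  rfl

theorem gaborTransform_linear_combination {f g : ℝ → ℂ} {x ω : ℝ}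
    (hf : Integrable (gaborIntegrand f x ω)) (hg : Integrable (gaborIntegrand g x ω)) (p q : ℂ) :
    gaborTransform (fun t => p * f t + q * g t) x ω =
      p * gaborTransform f x ω + q * gaborTransform g x ω := by
  have h : gaborIntegrand (fun t => p * f t + q * g t) x ω =
      fun t => p * gaborIntegrand f x ω t + q * gaborIntegrand g x ω t := by
    ext t
    simp only [gaborIntegrand]
    ring
  simp only [gaborTransform_eq_integral_gaborIntegrand, h,
    integral_add (hf.const_mul p) (hg.const_mul q), integral_const_mul]
  ring

noncomputable def tiltedGaussian (b : ℂ) (t : ℝ) : ℂ :=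
  normGaussian t * cexp (b * t)

theorem gaborIntegrand_tiltedGaussian (b : ℂ) (x ω t : ℝ) :
    gaborIntegrand (tiltedGaussian b) x ω t =
      (((2 : ℝ) ^ ((1 : ℝ) / 4) : ℝ) : ℂ) *
        cexp (-(2 * Real.pi) * t ^ 2 + (2 * Real.pi * x + b - 2 * Real.pi * I * ω) * t
          + -Real.pi * x ^ 2) := by
  simp only [gaborIntegrand, tiltedGaussian, normGaussian, ofReal_mul, ofReal_exp, mul_assoc,
    ← Complex.exp_add]
  congr 2
  push_cast
  ring

theorem integrable_gaborIntegrand_tiltedGaussian (b : ℂ) (x ω : ℝ) :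
    Integrable (gaborIntegrand (tiltedGaussian b) x ω) := by
  simp only [funext (gaborIntegrand_tiltedGaussian b x ω)]
  exact (integrable_cexp_quadratic (by simp [Real.pi_pos]) _ _).const_mul _

theorem two_rpow_quarter_mul_self_mul_half_rpow_half :
    (2 : ℝ) ^ ((1 : ℝ) / 4) * (2 : ℝ) ^ ((1 : ℝ) / 4) * (1 / 2 : ℝ) ^ (1 / 2 : ℝ) = 1 := by
  rw [← Real.rpow_add two_pos, Real.div_rpow zero_le_one zero_le_two, Real.one_rpow]
  norm_num

theorem gaborTransform_tiltedGaussian (b : ℂ) (x ω : ℝ) :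
    gaborTransform (tiltedGaussian b) x ω =
      cexp ((2 * Real.pi * x + b - 2 * Real.pi * I * ω) ^ 2 / (8 * Real.pi) - Real.pi * x ^ 2) := by
  have hπ : (Real.pi : ℂ) ≠ 0 := by exact_mod_cast Real.pi_ne_zero
  have hscale : (((2 : ℝ) ^ ((1 : ℝ) / 4) : ℝ) : ℂ) * (((2 : ℝ) ^ ((1 : ℝ) / 4) : ℝ) : ℂ) *
      ((Real.pi : ℂ) / -(-(2 * Real.pi))) ^ (1 / 2 : ℂ) = 1 := by
    rw [neg_neg, show (Real.pi : ℂ) / (2 * Real.pi) = ((1 / 2 : ℝ) : ℂ) by push_cast; field_simp,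
      show (1 / 2 : ℂ) = ((1 / 2 : ℝ) : ℂ) by push_cast; rfl,
      ← ofReal_cpow (by norm_num), ← ofReal_mul, ← ofReal_mul,
      two_rpow_quarter_mul_self_mul_half_rpow_half, ofReal_one]
  have h := integral_cexp_quadratic (b := -(2 * Real.pi)) (by simp [Real.pi_pos])
    (2 * Real.pi * x + b - 2 * Real.pi * I * ω) (-Real.pi * x ^ 2)
  simp only [gaborTransform_eq_integral_gaborIntegrand, gaborIntegrand_tiltedGaussian,
    integral_const_mul]
  rw [h, ← mul_assoc, ← mul_assoc, hscale, one_mul]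
  congr 1
  field_simp
  ring

theorem gaborTransform_tiltedGaussian_eq_exp_mul (b : ℂ) (x ω : ℝ) :
    gaborTransform (tiltedGaussian b) x ω =
      cexp (b * (x - ω * I)) * gaborTransform (tiltedGaussian (-b)) x ω := by
  have hπ : (Real.pi : ℂ) ≠ 0 := by exact_mod_cast Real.pi_ne_zero
  rw [gaborTransform_tiltedGaussian, gaborTransform_tiltedGaussian, ← Complex.exp_add]
  congr 1
  field_simp
  ring

theorem exp_pi_div_mul_sub_int_mul_I {a : ℝ} (ha : a ≠ 0) (x : ℝ) (n : ℤ) :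
    cexp ((Real.pi / a : ℝ) * (x - (a * n : ℝ) * I)) =
      ((Real.exp (Real.pi * x / a) * (-1) ^ n : ℝ) : ℂ) := by
  have h : ((Real.pi / a : ℝ) : ℂ) * (x - (a * n : ℝ) * I) =
      ((Real.pi * x / a : ℝ) : ℂ) + n * -(Real.pi * I) := by
    have ha' : (a : ℂ) ≠ 0 := ofReal_ne_zero.2 ha
    push_cast
    field_simp
    ring
  rw [h, Complex.exp_add, exp_int_mul, Complex.exp_neg, exp_pi_mul_I]
  push_cast
  norm_num

theorem norm_mul_ofReal_mul_add_conj_mul (u B : ℂ) (r : ℝ) :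
    ‖u * (r * B) + conj u * B‖ = ‖conj u * (r * B) + u * B‖ := by
  have h : conj u * (r * B) + u * B = conj (u * r + conj u) * B := by
    simp only [map_add, map_mul, conj_ofReal, conj_conj]
    ring
  rw [h, show u * (r * B) + conj u * B = (u * r + conj u) * B by ring, norm_mul, norm_mul,
    norm_conj]

theorem normGaussian_mul_cosh_add_mul_sinh (a : ℝ) (ε : ℂ) (t : ℝ) :
    normGaussian t * ((Real.cosh (Real.pi * t / a) : ℂ) + ε * (Real.sinh (Real.pi * t / a) : ℂ)) =
      (1 + ε) / 2 * tiltedGaussian (Real.pi / a : ℝ) t +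
        (1 - ε) / 2 * tiltedGaussian (-(Real.pi / a : ℝ)) t := by
  have h : ((Real.pi / a : ℝ) : ℂ) * t = ((Real.pi * t / a : ℝ) : ℂ) := by
    push_cast
    ring
  simp only [tiltedGaussian, neg_mul, h, ← Complex.cosh_add_sinh, Complex.cosh_neg,
    Complex.sinh_neg, ofReal_cosh, ofReal_sinh]
  ring

theorem hPlus_eq (a : ℝ) :
    hPlus a = fun t => (1 + I) / 2 * tiltedGaussian (Real.pi / a : ℝ) t +
      (1 - I) / 2 * tiltedGaussian (-(Real.pi / a : ℝ)) t :=
  funext fun t => normGaussian_mul_cosh_add_mul_sinh a I t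

theorem hMinus_eq (a : ℝ) :
    hMinus a = fun t => (1 - I) / 2 * tiltedGaussian (Real.pi / a : ℝ) t +
      (1 + I) / 2 * tiltedGaussian (-(Real.pi / a : ℝ)) t := by
  funext t
  rw [hMinus, sub_eq_add_neg, ← neg_mul, normGaussian_mul_cosh_add_mul_sinh, sub_neg_eq_add,
    ← sub_eq_add_neg]

theorem norm_gaborTransform_hPlus_eq_hMinus {a : ℝ} (ha : a ≠ 0) (x : ℝ) (n : ℤ) :
    ‖gaborTransform (hPlus a) x (a * n)‖ = ‖gaborTransform (hMinus a) x (a * n)‖ := by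
  have hconj : (1 - I) / 2 = conj ((1 + I) / 2) := by
    rw [map_div₀, map_add, map_one, conj_I, map_ofNat, sub_eq_add_neg]
  simp only [hPlus_eq, hMinus_eq,
    gaborTransform_linear_combination (integrable_gaborIntegrand_tiltedGaussian _ _ _)
      (integrable_gaborIntegrand_tiltedGaussian _ _ _),
    gaborTransform_tiltedGaussian_eq_exp_mul ((Real.pi / a : ℝ) : ℂ),
    exp_pi_div_mul_sub_int_mul_I ha, hconj]
  exact norm_mul_ofReal_mul_add_conj_mul _ _ _

theorem memLp_two_tiltedGaussian (b : ℂ) : MemLp (tiltedGaussian b) 2 volume := by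
  have hcont : Continuous (tiltedGaussian b) := by
    unfold tiltedGaussian normGaussian
    fun_prop
  have hsq (t : ℝ) : tiltedGaussian b t ^ 2 =
      (((2 : ℝ) ^ ((1 : ℝ) / 4) : ℝ) : ℂ) ^ 2 * cexp (-(2 * Real.pi) * t ^ 2 + 2 * b * t + 0) := by
    simp only [tiltedGaussian, normGaussian, ofReal_mul, ofReal_exp, mul_pow,
      ← Complex.exp_nat_mul, mul_assoc, ← Complex.exp_add]
    push_cast
    ring_nf
  rw [memLp_two_iff_integrable_sq_norm hcont.aestronglyMeasurable]
  simp only [← norm_pow, hsq]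
  exact ((integrable_cexp_quadratic (by simp [Real.pi_pos]) _ _).const_mul _).norm

theorem normGaussian_ne_zero (t : ℝ) : normGaussian t ≠ 0 :=
  ofReal_ne_zero.2 (by positivity)

theorem hPlus_sub_hMinus (a t : ℝ) :
    hPlus a t - hMinus a t = 2 * I * normGaussian t * Real.sinh (Real.pi * t / a) := by
  simp only [hPlus, hMinus]
  ring

theorem not_exists_hPlus_eq_exp_mul_hMinus {a : ℝ} (ha : a ≠ 0) :
    ¬ ∃ α : ℝ, ∀ t : ℝ, hPlus a t = cexp (α * I) * hMinus a t := by
  rintro ⟨α, hα⟩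
  have hphase : cexp (α * I) = 1 := by
    have h0 := hα 0
    simp only [hPlus, hMinus, mul_zero, zero_div, Real.cosh_zero, Real.sinh_zero, ofReal_zero,
      ofReal_one, add_zero, sub_zero, mul_one] at h0
    exact (mul_eq_right₀ (normGaussian_ne_zero 0)).1 h0.symm
  have h := sub_eq_zero.2 (hα a)
  rw [hphase, one_mul, hPlus_sub_hMinus, mul_div_cancel_right₀ _ ha] at h
  simp only [mul_eq_zero, two_ne_zero, I_ne_zero, normGaussian_ne_zero, ofReal_eq_zero,
    Real.sinh_eq_zero, Real.pi_ne_zero, or_self] at h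

/-- For `a > 0`, the signals `h⁺` and `h⁻` are in `L²(ℝ)`, their Gabor transform magnitudes
agree on `ℝ × aℤ`, and they do not agree up to global phase. -/
theorem hPlus_hMinus_counterexamples (a : ℝ) (ha : 0 < a) :
    MeasureTheory.MemLp (hPlus a) 2 (volume : Measure ℝ) ∧
    MeasureTheory.MemLp (hMinus a) 2 (volume : Measure ℝ) ∧
    (∀ x : ℝ, ∀ n : ℤ,
      ‖gaborTransform (hPlus a) x (a * n)‖ =
        ‖gaborTransform (hMinus a) x (a * n)‖) ∧
    ¬ ∃ α : ℝ, ∀ t : ℝ, hPlus a t = Complex.exp (α * Complex.I) * hMinus a t := by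
  refine ⟨?_, ?_, norm_gaborTransform_hPlus_eq_hMinus ha.ne',
    not_exists_hPlus_eq_exp_mul_hMinus ha.ne'⟩
  · rw [hPlus_eq]
    exact ((memLp_two_tiltedGaussian _).const_mul _).add ((memLp_two_tiltedGaussian _).const_mul _)
  · rw [hMinus_eq]
    exact ((memLp_two_tiltedGaussian _).const_mul _).add ((memLp_two_tiltedGaussian _).const_mul _)
end

section
/- Let a > 0 and δ > 0 and define the entire functions H^±_δ(z) = 1 ± i δ e^{πz/a} for z ∈ ℂ. Then: (i) |H^+_δ(z)| = |H^-_δ(z)| for every z ∈ ℝ + i aℤ; (ii) H^+_δ and H^-_δ have no common zero, and each has infinitely many zeros; in particular, there is no α ∈ ℝ with H^+_δ = e^{iα} H^-_δ. -/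
open Complex

/-- `H⁺_δ(z) = 1 + iδ e^{πz/a}`. -/
noncomputable def HPlus (a δ : ℝ) (z : ℂ) : ℂ :=
  1 + Complex.I * (δ : ℂ) * Complex.exp ((Real.pi : ℂ) * z / a)

/-- `H⁻_δ(z) = 1 - iδ e^{πz/a}`. -/
noncomputable def HMinus (a δ : ℝ) (z : ℂ) : ℂ :=
  1 - Complex.I * (δ : ℂ) * Complex.exp ((Real.pi : ℂ) * z / a)

/-! Where `e^{πz/a}` is real, `H⁻_δ(z)` is the complex conjugate of `H⁺_δ(z)`, and on
`ℝ + iaℤ` we have `e^{πz/a} = ±e^{πx/a}`. Both functions are affine in `e^{πz/a}`, which takes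
every nonzero value on a whole `2aiℤ`-coset, so each has infinitely many zeros, while
`H⁺_δ + H⁻_δ = 2` rules out a common zero and hence any relation `H⁺_δ = e^{iα} H⁻_δ`. -/

open scoped Real ComplexConjugate

namespace Complex

theorem setOf_exp_mul_eq_infinite {w c : ℂ} (hw : w ≠ 0) (hc : c ≠ 0) :
    {z : ℂ | exp (w * z) = c}.Infinite := by
  refine Set.infinite_of_injective_forall_mem
    (f := fun k : ℤ => (log c + k * (2 * π * I)) / w) (fun k m hkm => ?_) (fun k => ?_)
  · have h2πI : 2 * (π : ℂ) * I ≠ 0 := by simp [Real.pi_ne_zero, I_ne_zero]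
    have hk : (k : ℂ) * (2 * π * I) = m * (2 * π * I) :=
      add_left_cancel ((div_left_inj' hw).mp hkm)
    exact_mod_cast mul_right_cancel₀ h2πI hk
  · simp only [Set.mem_ofPred_eq, mul_div_cancel₀ _ hw, exp_add, exp_log hc,
      exp_int_mul_two_pi_mul_I, mul_one]

theorem exp_pi_mul_div_add_int_mul_I {a : ℝ} (ha : a ≠ 0) (x : ℝ) (n : ℤ) :
    exp (π * (x + (a * n : ℝ) * I) / a) = ((Real.exp (π * x / a) * (-1) ^ n : ℝ) : ℂ) := by
  have haC : (a : ℂ) ≠ 0 := ofReal_ne_zero.mpr ha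
  have harg : (π : ℂ) * (x + (a * n : ℝ) * I) / a = ((π * x / a : ℝ) : ℂ) + n * (π * I) := by
    push_cast
    field_simp
  rw [harg, exp_add, exp_int_mul, exp_pi_mul_I]
  push_cast [ofReal_exp]
  ring

end Complex

section HPlusHMinus

variable {a δ : ℝ} {z : ℂ}

theorem HMinus_eq_HPlus_neg : HMinus a δ = HPlus a (-δ) := by
  ext z
  simp only [HMinus, HPlus, ofReal_neg]
  ring

theorem HPlus_add_HMinus : HPlus a δ z + HMinus a δ z = 2 := by
  rw [HPlus, HMinus]
  ring

theorem HMinus_eq_conj_HPlus {r : ℝ} (hr : exp (π * z / a) = r) :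
    HMinus a δ z = conj (HPlus a δ z) := by
  simp only [HMinus, HPlus, hr, map_add, map_mul, map_one, conj_I, conj_ofReal]
  ring

theorem HPlus_eq_zero_iff (hδ : δ ≠ 0) : HPlus a δ z = 0 ↔ exp (π * z / a) = I / δ := by
  have hδC : (δ : ℂ) ≠ 0 := ofReal_ne_zero.mpr hδ
  rw [HPlus, eq_div_iff hδC]
  constructor <;> intro h
  · linear_combination -I * h + δ * exp (π * z / a) * I_mul_I
  · linear_combination I * h + I_mul_I

theorem setOf_HPlus_eq_zero_infinite (ha : a ≠ 0) (hδ : δ ≠ 0) :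
    {z : ℂ | HPlus a δ z = 0}.Infinite := by
  simp_rw [HPlus_eq_zero_iff hδ, mul_div_right_comm (π : ℂ)]
  exact setOf_exp_mul_eq_infinite (div_ne_zero (ofReal_ne_zero.mpr Real.pi_ne_zero)
    (ofReal_ne_zero.mpr ha)) (div_ne_zero I_ne_zero (ofReal_ne_zero.mpr hδ))

end HPlusHMinus

/-- For `a, δ > 0`: (i) `|H⁺_δ| = |H⁻_δ|` on `ℝ + iaℤ`; (ii) `H⁺_δ` and `H⁻_δ` have no
common zero and each has infinitely many zeros; in particular they do not agree up to
global phase. -/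
theorem HPlus_HMinus_properties (a δ : ℝ) (ha : 0 < a) (hδ : 0 < δ) :
    (∀ x : ℝ, ∀ n : ℤ,
      ‖HPlus a δ ((x : ℂ) + (a * n : ℝ) * Complex.I)‖ =
        ‖HMinus a δ ((x : ℂ) + (a * n : ℝ) * Complex.I)‖) ∧
    (∀ z : ℂ, ¬ (HPlus a δ z = 0 ∧ HMinus a δ z = 0)) ∧
    {z : ℂ | HPlus a δ z = 0}.Infinite ∧
    {z : ℂ | HMinus a δ z = 0}.Infinite ∧
    ¬ ∃ α : ℝ, ∀ z : ℂ, HPlus a δ z = Complex.exp (α * Complex.I) * HMinus a δ z := by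
  have no_common_zero : ∀ z : ℂ, ¬ (HPlus a δ z = 0 ∧ HMinus a δ z = 0) := by
    rintro z ⟨hplus, hminus⟩
    simpa [hplus, hminus] using (HPlus_add_HMinus (a := a) (δ := δ) (z := z)).symm
  have plus_infinite := setOf_HPlus_eq_zero_infinite ha.ne' hδ.ne'
  refine ⟨fun x n => ?_, no_common_zero, plus_infinite, ?_, ?_⟩
  · rw [HMinus_eq_conj_HPlus (exp_pi_mul_div_add_int_mul_I ha.ne' x n), norm_conj]
  · rw [HMinus_eq_HPlus_neg]
    exact setOf_HPlus_eq_zero_infinite ha.ne' (neg_ne_zero.mpr hδ.ne')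
  · rintro ⟨α, hα⟩
    obtain ⟨z₀, hz₀⟩ := plus_infinite.nonempty
    have hminus : HMinus a δ z₀ = 0 :=
      (mul_eq_zero.mp ((hα z₀).symm.trans hz₀)).resolve_left (exp_ne_zero _)
    exact no_common_zero z₀ ⟨hz₀, hminus⟩
end

section
/- Let F : ℂ → ℂ be an entire function with ‖F‖_F = (∫_ℂ |F(z)|² e^{-π|z|²} dz)^{1/2} < ∞. Then for every z ∈ ℂ, |F(z)| ≤ ‖F‖_F · e^{(π/2)|z|²}. -/
/-!
Translating by the Weyl operator `G w = F (w + z) * exp (-π z̄ w)` gives `G 0 = F z` and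
`|G w|² e^{-π|w|²} = |F (w + z)|² e^{-π|w + z|²} e^{π|z|²}`, so it suffices to show
`|G 0|² ≤ ∫ |G|² e^{-π|w|²}`. By the mean value property of `G²`, every circle average of `|G|²`
around `0` dominates `|G 0|²`; integrating in polar coordinates against the radial probability
density `e^{-π|w|²}` gives the claim.
-/

open MeasureTheory Complex Real Set ComplexConjugate

section CircleAverage

variable {E : Type*} [NormedAddCommGroup E] [NormedSpace ℝ E]

theorem norm_circleAverage_le (f : ℂ → E) (c : ℂ) (R : ℝ) :
    ‖circleAverage f c R‖ ≤ circleAverage (fun w => ‖f w‖) c R := by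
  rw [circleAverage_def, circleAverage_def, norm_smul, smul_eq_mul,
    Real.norm_of_nonneg (by positivity)]
  gcongr
  exact intervalIntegral.norm_integral_le_integral_norm two_pi_pos.le

theorem sq_norm_le_circleAverage_sq_norm {G : ℂ → ℂ} (hG : Differentiable ℂ G) (c : ℂ) (R : ℝ) :
    ‖G c‖ ^ 2 ≤ circleAverage (fun w => ‖G w‖ ^ 2) c R := by
  have hmean : circleAverage (fun w => G w ^ 2) c R = G c ^ 2 :=
    (hG.pow 2).diffContOnCl.circleAverage
  have h := norm_circleAverage_le (fun w => G w ^ 2) c R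
  rw [hmean] at h
  simpa only [norm_pow] using h

theorem integrableOn_polarCoord_symm {f : ℝ × ℝ → E} (hf : Integrable f) :
    IntegrableOn (fun p : ℝ × ℝ => p.1 • f (polarCoord.symm p)) polarCoord.target := by
  have hs : MeasurableSet polarCoord.target := polarCoord.open_target.measurableSet
  have h := (integrableOn_image_iff_integrableOn_abs_det_fderiv_smul volume hs
    (fun p _ => (hasFDerivAt_polarCoord_symm p).hasFDerivWithinAt) polarCoord.symm.injOn f).mp
    (by rw [polarCoord.symm_image_target_eq_source]; exact hf.integrableOn)
  simp_rw [det_fderivPolarCoordSymm] at h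
  exact h.congr_fun (fun p hp => by simp only [abs_of_pos (show 0 < p.1 from hp.1)]) hs

theorem Complex.integrableOn_polarCoord_symm {f : ℂ → E} (hf : Integrable f) :
    IntegrableOn (fun p : ℝ × ℝ => p.1 • f (Complex.polarCoord.symm p)) polarCoord.target :=
  _root_.integrableOn_polarCoord_symm <|
    (volume_preserving_equiv_real_prod.symm.integrable_comp_emb
      measurableEquivRealProd.symm.measurableEmbedding).mpr hf

theorem circleMap_zero_eq_polarCoord_symm (r θ : ℝ) :
    circleMap 0 r θ = Complex.polarCoord.symm (r, θ) := by
  rw [Complex.polarCoord_symm_apply, circleMap, zero_add, Complex.exp_mul_I]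
  push_cast
  ring

theorem setIntegral_Ioo_polarCoord_symm_eq_circleAverage (f : ℂ → E) (r : ℝ) :
    ∫ θ in Ioo (-π) π, r • f (Complex.polarCoord.symm (r, θ)) =
      (2 * π * r) • circleAverage f 0 r := by
  rw [circleAverage_eq_integral_add (-π), intervalIntegral.integral_comp_add_right
    (fun θ => f (circleMap 0 r θ)), smul_smul, integral_smul,
    zero_add, show 2 * π + -π = π by ring, intervalIntegral.integral_of_le (by linarith [pi_pos]),
    ← integral_Ioc_eq_integral_Ioo, show 2 * π * r * (2 * π)⁻¹ = r by field_simp]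
  simp_rw [circleMap_zero_eq_polarCoord_symm]

theorem integrableOn_Ioi_circleAverage {f : ℂ → E} (hf : Integrable f) :
    IntegrableOn (fun r => (2 * π * r) • circleAverage f 0 r) (Ioi 0) := by
  have h := Complex.integrableOn_polarCoord_symm hf
  rw [polarCoord_target, IntegrableOn, Measure.volume_eq_prod, ← Measure.prod_restrict]
    at h
  have hr := h.integral_prod_left
  simp only [setIntegral_Ioo_polarCoord_symm_eq_circleAverage] at hr
  exact hr

theorem integral_eq_integral_Ioi_circleAverage {f : ℂ → E} (hf : Integrable f) :
    ∫ w, f w = ∫ r in Ioi 0, (2 * π * r) • circleAverage f 0 r := by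
  have h := Complex.integrableOn_polarCoord_symm hf
  rw [polarCoord_target, Measure.volume_eq_prod] at h
  rw [← Complex.integral_comp_polarCoord_symm, polarCoord_target, Measure.volume_eq_prod,
    setIntegral_prod _ h]
  simp_rw [setIntegral_Ioo_polarCoord_symm_eq_circleAverage]

end CircleAverage

theorem sq_norm_mul_integral_radial_le {G : ℂ → ℂ} (hG : Differentiable ℂ G) {φ : ℝ → ℝ}
    (hφ : ∀ r, 0 ≤ φ r) (hφi : Integrable fun w : ℂ => φ ‖w‖)
    (hGi : Integrable fun w : ℂ => ‖G w‖ ^ 2 * φ ‖w‖) :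
    ‖G 0‖ ^ 2 * ∫ w : ℂ, φ ‖w‖ ≤ ∫ w, ‖G w‖ ^ 2 * φ ‖w‖ := by
  rw [integral_eq_integral_Ioi_circleAverage hφi, integral_eq_integral_Ioi_circleAverage hGi,
    ← integral_const_mul]
  refine setIntegral_mono_on ((integrableOn_Ioi_circleAverage hφi).const_mul _)
    (integrableOn_Ioi_circleAverage hGi) measurableSet_Ioi fun r (hr : 0 < r) => ?_
  have hsphere : ∀ w ∈ Metric.sphere (0 : ℂ) |r|, ‖w‖ = r := by
    intro w hw
    rw [mem_sphere_zero_iff_norm.mp hw, abs_of_pos hr]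
  have hweight : circleAverage (fun w : ℂ => φ ‖w‖) 0 r = φ r :=
    circleAverage_const_on_circle fun w hw => by rw [hsphere w hw]
  have hproduct : circleAverage (fun w => ‖G w‖ ^ 2 * φ ‖w‖) 0 r =
      φ r * circleAverage (fun w => ‖G w‖ ^ 2) 0 r := by
    rw [← smul_eq_mul, ← circleAverage_fun_smul]
    exact circleAverage_congr_sphere fun w hw => by simp only [hsphere w hw, smul_eq_mul, mul_comm]
  have hr_weight : 0 ≤ 2 * π * r * φ r := mul_nonneg (by positivity) (hφ r)
  rw [hweight, hproduct, smul_eq_mul, smul_eq_mul]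
  calc ‖G 0‖ ^ 2 * (2 * π * r * φ r) = (2 * π * r * φ r) * ‖G 0‖ ^ 2 := mul_comm _ _
    _ ≤ (2 * π * r * φ r) * circleAverage (fun w => ‖G w‖ ^ 2) 0 r :=
      mul_le_mul_of_nonneg_left (sq_norm_le_circleAverage_sq_norm hG 0 r) hr_weight
    _ = 2 * π * r * (φ r * circleAverage (fun w => ‖G w‖ ^ 2) 0 r) := by ring

theorem integral_exp_neg_pi_mul_sq_norm : ∫ w : ℂ, Real.exp (-π * ‖w‖ ^ 2) = 1 := by
  rw [GaussianFourier.integral_rexp_neg_mul_sq_norm pi_pos, div_self pi_ne_zero, one_rpow]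

theorem sq_norm_cexp_mul_exp_neg_pi_sq_norm (z w : ℂ) :
    ‖cexp (-(π * conj z * w))‖ ^ 2 * Real.exp (-π * ‖w‖ ^ 2) =
      Real.exp (-π * ‖w + z‖ ^ 2) * Real.exp (π * ‖z‖ ^ 2) := by
  rw [Complex.norm_exp, sq, ← Real.exp_add, ← Real.exp_add, ← Real.exp_add]
  congr 1
  simp only [Complex.sq_norm, normSq_apply, neg_re, mul_re, mul_im, add_re, add_im, ofReal_re,
    ofReal_im, conj_re, conj_im]
  ring

/-- Pointwise bound in the Fock space: if `F` is entire with finite Fock norm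
`‖F‖_F = (∫_ℂ |F(z)|² e^{-π|z|²} dz)^{1/2}`, then `|F(z)| ≤ ‖F‖_F e^{(π/2)|z|²}`. -/
theorem fock_pointwise_bound (F : ℂ → ℂ) (hF : Differentiable ℂ F)
    (hFock : Integrable (fun z : ℂ => ‖F z‖ ^ 2 * Real.exp (-Real.pi * ‖z‖ ^ 2))
      (volume : Measure ℂ)) :
    ∀ z : ℂ, ‖F z‖ ≤
      Real.sqrt (∫ w : ℂ, ‖F w‖ ^ 2 * Real.exp (-Real.pi * ‖w‖ ^ 2)) *
        Real.exp (Real.pi / 2 * ‖z‖ ^ 2) := by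
  intro z
  set G : ℂ → ℂ := fun w => F (w + z) * cexp (-(π * conj z * w)) with hG_def
  have hG : Differentiable ℂ G := by fun_prop
  have hGF : ∀ w, ‖G w‖ ^ 2 * Real.exp (-π * ‖w‖ ^ 2) =
      ‖F (w + z)‖ ^ 2 * Real.exp (-π * ‖w + z‖ ^ 2) * Real.exp (π * ‖z‖ ^ 2) := fun w => by
    rw [hG_def, norm_mul, mul_pow, mul_assoc, sq_norm_cexp_mul_exp_neg_pi_sq_norm, mul_assoc]
  have hGi : Integrable fun w => ‖G w‖ ^ 2 * Real.exp (-π * ‖w‖ ^ 2) := by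
    simp_rw [hGF]
    exact (hFock.comp_add_right z).mul_const _
  have hgauss : Integrable fun w : ℂ => Real.exp (-π * ‖w‖ ^ 2) :=
    .of_integral_ne_zero (by rw [integral_exp_neg_pi_mul_sq_norm]; exact one_ne_zero)
  have hbound := sq_norm_mul_integral_radial_le hG (φ := fun r => Real.exp (-π * r ^ 2))
    (fun _ => (Real.exp_pos _).le) hgauss hGi
  simp only [integral_exp_neg_pi_mul_sq_norm, mul_one, hGF, integral_mul_const,
    integral_add_right_eq_self (fun w : ℂ => ‖F w‖ ^ 2 * Real.exp (-π * ‖w‖ ^ 2))] at hbound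
  rw [show G 0 = F z by simp [hG_def]] at hbound
  calc ‖F z‖ = √(‖F z‖ ^ 2) := (sqrt_sq (norm_nonneg _)).symm
    _ ≤ √((∫ w : ℂ, ‖F w‖ ^ 2 * Real.exp (-π * ‖w‖ ^ 2)) * Real.exp (π * ‖z‖ ^ 2)) :=
      sqrt_le_sqrt hbound
    _ = _ := by
      rw [sqrt_mul (integral_nonneg fun w => by positivity), ← Real.exp_half]
      ring_nf
end
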